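/- (Lemma 3.3, volume case k = d.) There is a constant c > 0 such that for every closed set B ⊆ ℝ^d and every ε ∈ (0,R), λ_d(F_ε ∩ B) ≤ c · #Ω(B,ε) · ε^d, where Ω(B,ε) := {ω ∈ Σ(ε) : (S_ω F)_ε ∩ B ≠ ∅} and #Ω(B,ε) is its cardinality. -/

import Mathlib

/-!
Every point of `F` lies in a cylinder `S_ω F` with `ω ∈ Σ(ε)`: refine the empty word letter by
letter until `R r_ω` drops below `ε`. Hence `F_ε ∩ B` is covered by the sets `(S_ω F)_ε` with
`ω ∈ Ω(B, ε)`, a finite family. Each cylinder has diameter `r_ω diam F < R r_ω < ε`, so its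
`ε`-parallel set lies in a ball of radius `2ε`, whose volume is `(2ε)^d λ_d(B(0,1))`.
-/

open MeasureTheory Filter Metric Set
open scoped ENNReal

/-- For a word `ω = ω₁…ωₙ`, the product `r_ω = r_{ω₁} ⋯ r_{ωₙ}` of contraction
ratios (`r_∅ = 1`). -/
def wordRatio {N : ℕ} (r : Fin N → ℝ) (ω : List (Fin N)) : ℝ := (ω.map r).prod

/-- For a word `ω = ω₁…ωₙ`, the composed map `S_ω = S_{ω₁} ∘ ⋯ ∘ S_{ωₙ}`
(`S_∅ = id`). -/
def wordMap {N : ℕ} {E : Type*} (S : Fin N → E → E) (ω : List (Fin N)) : E → E :=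
  ω.foldr (fun i g => S i ∘ g) id

/-- The family `Σ(ε)` of all words `ω = ω₁…ωₙ`, `n ≥ 1`, with
`R r_ω < ε ≤ R r_{ω₁…ω_{n-1}}`. -/
def sigmaWords {N : ℕ} (r : Fin N → ℝ) (R ε : ℝ) : Set (List (Fin N)) :=
  {ω | ω ≠ [] ∧ R * wordRatio r ω < ε ∧ ε ≤ R * wordRatio r ω.dropLast}

lemma exists_lt_forall_le_of_forall_lt {ι : Type*} [Finite ι] {f : ι → ℝ} {a : ℝ}
    (h : ∀ i, f i < a) : ∃ b < a, ∀ i, f i ≤ b :=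
  (Eventually.and (f := nhdsWithin a (Iio a)) self_mem_nhdsWithin
    (eventually_all.2 fun i => nhdsWithin_le_nhds (eventually_ge_nhds (h i)))).exists

section Words

variable {N : ℕ} {E : Type*} {r : Fin N → ℝ} {S : Fin N → E → E}

lemma wordRatio_append_singleton (σ : List (Fin N)) (i : Fin N) :
    wordRatio r (σ ++ [i]) = wordRatio r σ * r i := by
  simp [wordRatio]

lemma wordRatio_nonneg (hr : ∀ i, 0 ≤ r i) (ω : List (Fin N)) : 0 ≤ wordRatio r ω :=
  List.prod_nonneg fun _ hx => by
    obtain ⟨i, -, rfl⟩ := List.mem_map.1 hx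
    exact hr i

lemma wordRatio_le_pow_length {ρ : ℝ} (hr : ∀ i, 0 ≤ r i) (hρ : ∀ i, r i ≤ ρ)
    (ω : List (Fin N)) : wordRatio r ω ≤ ρ ^ ω.length := by
  induction ω with
  | nil => simp [wordRatio]
  | cons i t ih =>
    simp only [wordRatio, List.map_cons, List.prod_cons, List.length_cons, pow_succ'] at ih ⊢
    exact mul_le_mul (hρ i) ih (wordRatio_nonneg hr t) ((hr i).trans (hρ i))

lemma wordMap_append_singleton (σ : List (Fin N)) (i : Fin N) :
    wordMap S (σ ++ [i]) = wordMap S σ ∘ S i := by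
  induction σ with
  | nil => rfl
  | cons j t ih => simp only [List.cons_append, wordMap, List.foldr_cons] at ih ⊢; rw [ih]; rfl

lemma image_wordMap_eq_iUnion {F : Set E} (hF : F = ⋃ i, S i '' F) (σ : List (Fin N)) :
    wordMap S σ '' F = ⋃ i, wordMap S (σ ++ [i]) '' F := by
  conv_lhs => rw [hF]
  simp only [image_iUnion, wordMap_append_singleton, image_comp]

lemma dist_wordMap [PseudoMetricSpace E] (hS : ∀ i x y, dist (S i x) (S i y) = r i * dist x y)
    (ω : List (Fin N)) (x y : E) :
    dist (wordMap S ω x) (wordMap S ω y) = wordRatio r ω * dist x y := by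
  induction ω with
  | nil => simp [wordMap, wordRatio]
  | cons i t ih =>
    simp only [wordMap, wordRatio, List.foldr_cons, List.map_cons, List.prod_cons,
      Function.comp_apply] at ih ⊢
    rw [hS, ih, mul_assoc]

lemma lipschitzWith_wordMap [PseudoMetricSpace E] (hr : ∀ i, 0 ≤ r i)
    (hS : ∀ i x y, dist (S i x) (S i y) = r i * dist x y) (ω : List (Fin N)) :
    LipschitzWith (wordRatio r ω).toNNReal (wordMap S ω) :=
  LipschitzWith.of_dist_le_mul fun x y => by
    rw [dist_wordMap hS, Real.coe_toNNReal _ (wordRatio_nonneg hr ω)]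

lemma diam_image_wordMap_le_of_mem_sigmaWords [PseudoMetricSpace E] (hr : ∀ i, 0 ≤ r i)
    (hS : ∀ i x y, dist (S i x) (S i y) = r i * dist x y) {F : Set E}
    (hF : Bornology.IsBounded F) {R ε : ℝ} (hFR : diam F ≤ R) {ω : List (Fin N)}
    (hω : ω ∈ sigmaWords r R ε) : diam (wordMap S ω '' F) ≤ ε := by
  have hω0 := wordRatio_nonneg hr ω
  calc diam (wordMap S ω '' F) ≤ wordRatio r ω * diam F := by
        simpa [hω0] using (lipschitzWith_wordMap hr hS ω).diam_image_le F hF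
    _ ≤ R * wordRatio r ω := by nlinarith
    _ ≤ ε := hω.2.1.le

end Words

section Sigma

variable {N : ℕ} {E : Type*} {r : Fin N → ℝ} {ρ R ε : ℝ}

lemma sigmaWords_finite (hr : ∀ i, 0 ≤ r i) (hρ : ∀ i, r i ≤ ρ) (hρ1 : ρ < 1)
    (hR : 0 < R) (hε : 0 < ε) : (sigmaWords r R ε).Finite := by
  obtain ⟨n, hn⟩ := exists_pow_lt_of_lt_one (div_pos hε hR) hρ1
  refine (List.finite_length_le (Fin N) (n + 1)).subset fun ω ⟨_, _, hdrop⟩ => ?_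
  show ω.length ≤ n + 1
  by_contra! hlen
  have hρ0 : 0 ≤ ρ := by
    obtain ⟨i, -⟩ := List.exists_mem_of_length_pos (by omega : 0 < ω.length)
    exact (hr i).trans (hρ i)
  have : wordRatio r ω.dropLast ≤ ρ ^ n :=
    (wordRatio_le_pow_length hr hρ _).trans
      (pow_le_pow_of_le_one hρ0 hρ1.le (by rw [List.length_dropLast]; omega))
  have := (lt_div_iff₀' hR).1 (this.trans_lt hn)
  linarith

lemma exists_mem_sigmaWords_of_mem_image {S : Fin N → E → E} {F : Set E}
    (hF : F = ⋃ i, S i '' F) (hr : ∀ i, 0 ≤ r i) (hρ : ∀ i, r i ≤ ρ) (hρ1 : ρ < 1)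
    (hε : 0 < ε) {σ : List (Fin N)} (hσ : ε ≤ R * wordRatio r σ) {x : E}
    (hx : x ∈ wordMap S σ '' F) : ∃ ω ∈ sigmaWords r R ε, x ∈ wordMap S ω '' F := by
  obtain ⟨n, hn⟩ := exists_pow_lt_of_lt_one (div_pos hε (hε.trans_le hσ)) hρ1
  replace hn : R * wordRatio r σ * ρ ^ n < ε := (lt_div_iff₀' (hε.trans_le hσ)).1 hn
  -- `n` bounds the number of letters still to be appended to `σ` before `R r_σ` drops below `ε`.
  induction n generalizing σ with
  | zero => linarith
  | succ n ih =>
    obtain ⟨i, hxi⟩ := mem_iUnion.1 (image_wordMap_eq_iUnion hF σ ▸ hx)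
    by_cases hlt : R * wordRatio r (σ ++ [i]) < ε
    · exact ⟨σ ++ [i], ⟨by simp, hlt, by rwa [List.dropLast_concat]⟩, hxi⟩
    · refine ih (not_lt.1 hlt) hxi ?_
      have hR : 0 ≤ R * wordRatio r σ := hε.le.trans hσ
      calc R * wordRatio r (σ ++ [i]) * ρ ^ n
          = R * wordRatio r σ * (r i * ρ ^ n) := by rw [wordRatio_append_singleton]; ring
        _ ≤ R * wordRatio r σ * ρ ^ (n + 1) := by
          rw [pow_succ']
          have hρ0 : 0 ≤ ρ := (hr i).trans (hρ i)
          exact mul_le_mul_of_nonneg_left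
            (mul_le_mul_of_nonneg_right (hρ i) (pow_nonneg hρ0 n)) hR
        _ < ε := hn

lemma subset_biUnion_sigmaWords {S : Fin N → E → E} {F : Set E}
    (hF : F = ⋃ i, S i '' F) (hr : ∀ i, 0 ≤ r i) (hρ : ∀ i, r i ≤ ρ) (hρ1 : ρ < 1)
    (hε : 0 < ε) (hεR : ε ≤ R) : F ⊆ ⋃ ω ∈ sigmaWords r R ε, wordMap S ω '' F := by
  intro x hx
  obtain ⟨ω, hω, hxω⟩ := exists_mem_sigmaWords_of_mem_image (σ := []) (R := R) hF hr hρ hρ1 hε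
    (by simpa [wordRatio] using hεR) (by simpa [wordMap] using hx)
  exact mem_biUnion hω hxω

lemma cthickening_inter_subset_biUnion_sigmaWords [PseudoMetricSpace E] {S : Fin N → E → E}
    {F : Set E} (hFc : IsCompact F) (hF : F = ⋃ i, S i '' F) (hr : ∀ i, 0 ≤ r i)
    (hρ : ∀ i, r i ≤ ρ) (hρ1 : ρ < 1) (hε : 0 < ε) (hεR : ε ≤ R) (B : Set E) :
    cthickening ε F ∩ B ⊆ ⋃ ω ∈ {ω ∈ sigmaWords r R ε |
      (cthickening ε (wordMap S ω '' F) ∩ B).Nonempty}, cthickening ε (wordMap S ω '' F) := by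
  rintro x ⟨hxF, hxB⟩
  rw [hFc.cthickening_eq_biUnion_closedBall hε.le] at hxF
  obtain ⟨y, hy, hxy⟩ := mem_iUnion₂.1 hxF
  obtain ⟨ω, hω, hyω⟩ := mem_iUnion₂.1 (subset_biUnion_sigmaWords hF hr hρ hρ1 hε hεR hy)
  have hx : x ∈ cthickening ε (wordMap S ω '' F) := closedBall_subset_cthickening hyω ε hxy
  exact mem_biUnion ⟨hω, x, hx, hxB⟩ hx

end Sigma

lemma measure_le_ncard_mul_of_subset_biUnion {α ι : Type*} [MeasurableSpace α] (μ : Measure α)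
    {s : Set α} {I : Set ι} (hI : I.Finite) {t : ι → Set α} {m : ℝ≥0∞}
    (hs : s ⊆ ⋃ i ∈ I, t i) (ht : ∀ i ∈ I, μ (t i) ≤ m) : μ s ≤ I.ncard * m := by
  rw [← hI.coe_toFinset] at hs
  calc μ s ≤ ∑ i ∈ hI.toFinset, μ (t i) := (measure_mono hs).trans (measure_biUnion_finset_le _ _)
    _ ≤ hI.toFinset.card • m := Finset.sum_le_card_nsmul _ _ _ fun i hi => ht i (by simpa using hi)
    _ = I.ncard * m := by rw [nsmul_eq_mul, Set.ncard_eq_toFinset_card I hI]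

lemma measure_cthickening_le_of_diam_le {E : Type*} [NormedAddCommGroup E] [NormedSpace ℝ E]
    [MeasurableSpace E] [BorelSpace E] [FiniteDimensional ℝ E] (μ : Measure E)
    [μ.IsAddHaarMeasure] {K : Set E} (hK : Bornology.IsBounded K) {δ ε : ℝ}
    (hKδ : diam K ≤ δ) (hε : 0 ≤ ε) :
    μ (cthickening ε K) ≤ ENNReal.ofReal ((ε + δ) ^ Module.finrank ℝ E) * μ (ball 0 1) := by
  rcases K.eq_empty_or_nonempty with rfl | ⟨x, hx⟩
  · simp
  have hδ : 0 ≤ δ := diam_nonneg.trans hKδ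
  have hKball : K ⊆ closedBall x δ := fun y hy =>
    mem_closedBall.2 ((dist_le_diam_of_mem hK hy hx).trans hKδ)
  calc μ (cthickening ε K) ≤ μ (cthickening ε (closedBall x δ)) :=
        measure_mono (cthickening_subset_of_subset ε hKball)
    _ = _ := by rw [cthickening_closedBall hε hδ, Measure.addHaar_closedBall μ x (by positivity)]

theorem volume_localized_estimate_general
    (d N : ℕ)
    (S : Fin N → EuclideanSpace ℝ (Fin d) → EuclideanSpace ℝ (Fin d))
    (r : Fin N → ℝ) (hr : ∀ i, r i ∈ Set.Ioo (0 : ℝ) 1)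
    (hS : ∀ i x y, dist (S i x) (S i y) = r i * dist x y)
    (F : Set (EuclideanSpace ℝ (Fin d))) (hFc : IsCompact F)
    (hFinv : F = ⋃ i, S i '' F)
    (R : ℝ) (hR : Real.sqrt 2 * Metric.diam F < R) :
    ∃ c > (0 : ℝ), ∀ B : Set (EuclideanSpace ℝ (Fin d)), IsClosed B →
      ∀ ε ∈ Set.Ioo (0 : ℝ) R,
        volume (Metric.cthickening ε F ∩ B) ≤
          ENNReal.ofReal (c *
            ({ω ∈ sigmaWords r R ε |
                (Metric.cthickening ε (wordMap S ω '' F) ∩ B).Nonempty}.ncard : ℝ) *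
            ε ^ (d : ℝ)) := by
  have hr0 : ∀ i, 0 ≤ r i := fun i => (hr i).1.le
  obtain ⟨ρ, hρ1, hρ⟩ := exists_lt_forall_le_of_forall_lt fun i => (hr i).2
  have hFR : diam F ≤ R := (le_mul_of_one_le_left diam_nonneg (by simp)).trans hR.le
  set V := volume (ball (0 : EuclideanSpace ℝ (Fin d)) 1)
  have hV : V ≠ ⊤ := measure_ball_lt_top.ne
  have hV0 : 0 < V.toReal := ENNReal.toReal_pos (measure_ball_pos volume _ one_pos).ne' hV
  refine ⟨2 ^ d * V.toReal, by positivity, fun B _ ε ⟨hε, hεR⟩ => ?_⟩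
  have hpiece : ∀ ω ∈ sigmaWords r R ε,
      volume (cthickening ε (wordMap S ω '' F)) ≤ ENNReal.ofReal ((ε + ε) ^ d) * V :=
    fun ω hω => by
      simpa using measure_cthickening_le_of_diam_le volume
        ((lipschitzWith_wordMap hr0 hS ω).isBounded_image hFc.isBounded)
        (diam_image_wordMap_le_of_mem_sigmaWords hr0 hS hFc.isBounded hFR hω) hε.le
  set Ω := {ω ∈ sigmaWords r R ε | (cthickening ε (wordMap S ω '' F) ∩ B).Nonempty}
  calc volume (cthickening ε F ∩ B) ≤ Ω.ncard * (ENNReal.ofReal ((ε + ε) ^ d) * V) :=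
        measure_le_ncard_mul_of_subset_biUnion volume
          ((sigmaWords_finite hr0 hρ hρ1 (hε.trans hεR) hε).subset (sep_subset _ _))
          (cthickening_inter_subset_biUnion_sigmaWords hFc hFinv hr0 hρ hρ1 hε hεR.le B)
          fun ω hω => hpiece ω hω.1
    _ = ENNReal.ofReal (2 ^ d * V.toReal * Ω.ncard * ε ^ (d : ℝ)) := by
        rw [Real.rpow_natCast, show (2 : ℝ) ^ d * V.toReal * Ω.ncard * ε ^ d =
            Ω.ncard * (ε + ε) ^ d * V.toReal by ring, ENNReal.ofReal_mul (by positivity),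
          ENNReal.ofReal_mul (by positivity), ENNReal.ofReal_natCast, ENNReal.ofReal_toReal hV,
          mul_assoc]

/-- Lemma 3.3 of Winter–Zähle, volume case `k = d`: for any closed `B`, the
volume of `F_ε` inside `B` is bounded by `c ε^d` times the number of
words `ω ∈ Σ(ε)` whose cylinder neighborhood `(S_ω F)_ε` meets `B`. -/
theorem volume_localized_estimate
    (d N : ℕ) (hd : 1 ≤ d) (hN : 2 ≤ N)
    (S : Fin N → EuclideanSpace ℝ (Fin d) → EuclideanSpace ℝ (Fin d))
    (r : Fin N → ℝ) (hr : ∀ i, r i ∈ Set.Ioo (0 : ℝ) 1)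
    (hS : ∀ i x y, dist (S i x) (S i y) = r i * dist x y)
    (F : Set (EuclideanSpace ℝ (Fin d))) (hFne : F.Nonempty) (hFc : IsCompact F)
    (hFinv : F = ⋃ i, S i '' F)
    (hOSC : ∃ O : Set (EuclideanSpace ℝ (Fin d)), O.Nonempty ∧ IsOpen O ∧
      Bornology.IsBounded O ∧ (⋃ i, S i '' O) ⊆ O ∧
      ∀ i j, i ≠ j → Disjoint (S i '' O) (S j '' O))
    (D : ℝ) (hD : 0 < D) (hDd : D ≤ d) (hDsum : ∑ i, r i ^ D = 1)
    (R : ℝ) (hR : Real.sqrt 2 * Metric.diam F < R) :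
    ∃ c > (0 : ℝ), ∀ B : Set (EuclideanSpace ℝ (Fin d)), IsClosed B →
      ∀ ε ∈ Set.Ioo (0 : ℝ) R,
        volume (Metric.cthickening ε F ∩ B) ≤
          ENNReal.ofReal (c *
            ({ω ∈ sigmaWords r R ε |
                (Metric.cthickening ε (wordMap S ω '' F) ∩ B).Nonempty}.ncard : ℝ) *
            ε ^ (d : ℝ)) :=
  volume_localized_estimate_general d N S r hr hS F hFc hFinv R hR
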